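/- On ℝ⁴ with coordinates (x₁,x₂,x₃,x₄), canonical structure J(∂₁)=∂₂, J(∂₂)=±∂₁, J(∂₃)=∂₄, J(∂₄)=±∂₃, and metric g_f := ε₁₁e^{2f}(dx¹⊗dx¹ ∓ dx²⊗dx²) + ε₂₂(dx³⊗dx³ ∓ dx⁴⊗dx⁴) where f = f(x₁,x₃), the covariant derivative of the Kähler form satisfies (∇^{g_f}Ω)(∂₁,∂₃;∂₂) = ∓ε₁₁e^{2f}∂₃f, (∇^{g_f}Ω)(∂₁,∂₄;∂₁) = ±ε₁₁e^{2f}∂₃f, (∇^{g_f}Ω)(∂₂,∂₄;∂₂) = -ε₁₁e^{2f}∂₃f, (∇^{g_f}Ω)(∂₂,∂₃;∂₁) = ±ε₁₁e^{2f}∂₃f, and all other components vanish up to the antisymmetry in the first two slots. -/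

import Mathlib

noncomputable section

/-- We model an `m`-dimensional (pseudo-Riemannian) manifold chart as Euclidean space. -/
abbrev E (m : ℕ) := EuclideanSpace ℝ (Fin m)

/-- Vector fields. -/
abbrev VF (m : ℕ) := E m → E m

def SmoothVF {m : ℕ} (X : VF m) : Prop := ContDiff ℝ (⊤ : ℕ∞) X

def SmoothF {m : ℕ} (f : E m → ℝ) : Prop := ContDiff ℝ (⊤ : ℕ∞) f

/-- The Lie bracket of vector fields. -/
def bracket {m : ℕ} (X Y : VF m) : VF m :=
  fun p => fderiv ℝ Y p (X p) - fderiv ℝ X p (Y p)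

/-- A pseudo-Riemannian metric: a smooth, symmetric, nondegenerate field of bilinear forms. -/
structure IsMetric {m : ℕ} (g : E m → E m → E m → ℝ) : Prop where
  smooth : ∀ X Y : VF m, SmoothVF X → SmoothVF Y → SmoothF fun p => g p (X p) (Y p)
  linL : ∀ p w, IsLinearMap ℝ fun v => g p v w
  linR : ∀ p v, IsLinearMap ℝ fun w => g p v w
  symm : ∀ p v w, g p v w = g p w v
  nondeg : ∀ p v, (∀ w, g p v w = 0) → v = 0

/-- The axioms of an affine connection (acting on smooth vector fields). -/
structure IsConnection {m : ℕ} (D : VF m → VF m → VF m) : Prop where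
  smooth : ∀ X Y, SmoothVF X → SmoothVF Y → SmoothVF (D X Y)
  addX : ∀ X X' Y, SmoothVF X → SmoothVF X' → SmoothVF Y → D (X + X') Y = D X Y + D X' Y
  fsmulX : ∀ (f : E m → ℝ) (X Y : VF m), SmoothF f → SmoothVF X → SmoothVF Y →
    D (fun p => f p • X p) Y = fun p => f p • D X Y p
  addY : ∀ X Y Y', SmoothVF X → SmoothVF Y → SmoothVF Y' → D X (Y + Y') = D X Y + D X Y'
  leibniz : ∀ (X Y : VF m) (f : E m → ℝ), SmoothVF X → SmoothVF Y → SmoothF f →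
    D X (fun p => f p • Y p) = fun p => f p • D X Y p + fderiv ℝ f p (X p) • Y p

/-- Torsion-freeness of a connection. -/
def TorsionFree {m : ℕ} (D : VF m → VF m → VF m) : Prop :=
  ∀ X Y : VF m, SmoothVF X → SmoothVF Y → ∀ p, D X Y p - D Y X p = bracket X Y p

/-- `(∇_X g)(Y,Z)` at the point `p`. -/
def covMetric {m : ℕ} (D : VF m → VF m → VF m) (g : E m → E m → E m → ℝ)
    (X Y Z : VF m) (p : E m) : ℝ :=
  fderiv ℝ (fun q => g q (Y q) (Z q)) p (X p) - g p (D X Y p) (Z p) - g p (Y p) (D X Z p)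

/-- `D` is the Levi-Civita connection of `g`. -/
def IsLeviCivita {m : ℕ} (D : VF m → VF m → VF m) (g : E m → E m → E m → ℝ) : Prop :=
  IsConnection D ∧ TorsionFree D ∧
    ∀ X Y Z : VF m, SmoothVF X → SmoothVF Y → SmoothVF Z → ∀ p, covMetric D g X Y Z p = 0

/-- The Weyl condition `∇ g = -2 φ ⊗ g`. -/
def WeylCompat {m : ℕ} (D : VF m → VF m → VF m) (g : E m → E m → E m → ℝ)
    (φ : E m → E m → ℝ) : Prop :=
  ∀ X Y Z : VF m, SmoothVF X → SmoothVF Y → SmoothVF Z → ∀ p,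
    covMetric D g X Y Z p = -2 * φ p (X p) * g p (Y p) (Z p)

/-- A smooth field of 1-forms. -/
structure IsOneForm {m : ℕ} (φ : E m → E m → ℝ) : Prop where
  lin : ∀ p, IsLinearMap ℝ (φ p)
  smooth : ∀ X : VF m, SmoothVF X → SmoothF fun p => φ p (X p)

/-- The connection `∇_X Y = ∇^g_X Y + φ(X)Y + φ(Y)X - g(X,Y)φ*`. -/
def weylD {m : ℕ} (Dg : VF m → VF m → VF m) (g : E m → E m → E m → ℝ)
    (φ : E m → E m → ℝ) (φs : VF m) : VF m → VF m → VF m :=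
  fun X Y p => Dg X Y p + φ p (X p) • Y p + φ p (Y p) • X p - g p (X p) (Y p) • φs p

/-- The curvature operator `R(X,Y)Z` of the connection `D`. -/
def Rop {m : ℕ} (D : VF m → VF m → VF m) (X Y Z : VF m) : VF m :=
  fun p => D X (D Y Z) p - D Y (D X Z) p - D (bracket X Y) Z p

/-- The constant vector field with value `v`. -/
def cVF {m : ℕ} (v : E m) : VF m := fun _ => v

/-- The standard basis of Euclidean space. -/
def bb {m : ℕ} (i : Fin m) : E m := EuclideanSpace.single i (1 : ℝ)

/-- The Ricci tensor `ρ(x,y) = Tr{z ↦ R(z,x)y}` of the connection `D`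
(computed at `p` using the standard coordinate trace). -/
def Ric {m : ℕ} (D : VF m → VF m → VF m) (x y : E m) (p : E m) : ℝ :=
  ∑ i, (Rop D (cVF (bb i)) (cVF x) (cVF y) p) i

/-- The alternating part `ρ_a` of the Ricci tensor. -/
def RicA {m : ℕ} (D : VF m → VF m → VF m) (x y : E m) (p : E m) : ℝ :=
  (Ric D x y p - Ric D y x p) / 2

/-- A para/pseudo-Hermitian structure `J` on `(E m, g)`: `J² = ε·Id` and
`g(Jx,Jy) = -ε g(x,y)`, where `ε = 1` (para) or `ε = -1` (pseudo). -/
structure IsHermitianJ {m : ℕ} (g : E m → E m → E m → ℝ)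
    (J : E m → E m → E m) (ε : ℝ) : Prop where
  sign : ε = 1 ∨ ε = -1
  lin : ∀ p, IsLinearMap ℝ (J p)
  smooth : ∀ X : VF m, SmoothVF X → SmoothVF fun p => J p (X p)
  square : ∀ p v, J p (J p v) = ε • v
  compat : ∀ p v w, g p (J p v) (J p w) = -ε * g p v w

/-- Integrability of `J` : the Nijenhuis tensor vanishes. -/
def Integrable {m : ℕ} (J : E m → E m → E m) (ε : ℝ) : Prop :=
  ∀ X Y : VF m, SmoothVF X → SmoothVF Y → ∀ p,
    bracket (fun q => J q (X q)) (fun q => J q (Y q)) p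
      - J p (bracket (fun q => J q (X q)) Y p)
      - J p (bracket X (fun q => J q (Y q)) p)
      + ε • bracket X Y p = 0

/-- `(∇_Z Ω)(X,Y)` at `p`, where `Ω(x,y) = g(x,Jy)` is the Kähler form;
this is `(∇Ω)(X,Y;Z)` in the notation of the paper. -/
def covOmega {m : ℕ} (Dg : VF m → VF m → VF m) (g : E m → E m → E m → ℝ)
    (J : E m → E m → E m) (X Y Z : VF m) (p : E m) : ℝ :=
  fderiv ℝ (fun q => g q (X q) (J q (Y q))) p (Z p)
    - g p (Dg Z X p) (J p (Y p)) - g p (X p) (J p (Dg Z Y p))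

/-- `∇J = 0` for the connection `D`. -/
def KahlerD {m : ℕ} (D : VF m → VF m → VF m) (J : E m → E m → E m) : Prop :=
  ∀ X Y : VF m, SmoothVF X → SmoothVF Y → ∀ p,
    D X (fun q => J q (Y q)) p = J p (D X Y p)

/-- The canonical (para)-complex structure on `ℝ⁴`:
`J∂₁ = ∂₂, J∂₂ = ε∂₁, J∂₃ = ∂₄, J∂₄ = ε∂₃`. -/
def Jc (ε : ℝ) (v : E 4) : E 4 :=
  (ε * v 1) • bb 0 + v 0 • bb 1 + (ε * v 3) • bb 2 + v 2 • bb 3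

/-- The metric `g_f = ε₁₁ e^{2f}(dx¹⊗dx¹ - ε dx²⊗dx²) + ε₂₂(dx³⊗dx³ - ε dx⁴⊗dx⁴)`. -/
def gf (ε ε11 ε22 : ℝ) (F : E 4 → ℝ) (p : E 4) (v w : E 4) : ℝ :=
  ε11 * Real.exp (2 * F p) * (v 0 * w 0 - ε * v 1 * w 1)
    + ε22 * (v 2 * w 2 - ε * v 3 * w 3)

/-- The components `(∇^{g_f}Ω)(∂_i,∂_j;∂_k)` at `p`. -/
def T11 (ε ε11 ε22 : ℝ) (F : E 4 → ℝ) (Dg : VF 4 → VF 4 → VF 4)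
    (i j k : Fin 4) (p : E 4) : ℝ :=
  covOmega Dg (gf ε ε11 ε22 F) (fun _ => Jc ε) (cVF (bb i)) (cVF (bb j)) (cVF (bb k)) p

section Aux

lemma smoothVF_cVF {m : ℕ} (v : E m) : SmoothVF (cVF v) := contDiff_const

lemma bracket_cVF {m : ℕ} (v w : E m) (p : E m) : bracket (cVF v) (cVF w) p = 0 := by
  simp only [bracket]
  unfold cVF
  simp

lemma koszul {m : ℕ} {D : VF m → VF m → VF m} {g : E m → E m → E m → ℝ}
    (hD : IsLeviCivita D g) (hsymm : ∀ p v w, g p v w = g p w v)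
    (x y z : E m) (p : E m) :
    2 * g p (D (cVF x) (cVF y) p) z
      = fderiv ℝ (fun q => g q y z) p x + fderiv ℝ (fun q => g q x z) p y
        - fderiv ℝ (fun q => g q x y) p z := by
  obtain ⟨hconn, htf, hmet⟩ := hD
  have hs : ∀ v : E m, SmoothVF (cVF v) := smoothVF_cVF
  have hsym : ∀ v w : E m, D (cVF v) (cVF w) p = D (cVF w) (cVF v) p := by
    intro v w
    have h := htf (cVF v) (cVF w) (hs v) (hs w) p
    rw [bracket_cVF] at h
    exact sub_eq_zero.mp h
  have e : ∀ a b c : E m,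
      fderiv ℝ (fun q => g q b c) p a
        = g p (D (cVF a) (cVF b) p) c + g p b (D (cVF a) (cVF c) p) := by
    intro a b c
    have h := hmet (cVF a) (cVF b) (cVF c) (hs a) (hs b) (hs c) p
    unfold covMetric at h
    simp only [cVF] at h
    linarith
  have e1 := e x y z
  have e2 := e y x z
  have e3 := e z x y
  rw [hsym y x] at e2
  rw [hsym z x, hsym z y] at e3
  rw [hsymm p y (D (cVF x) (cVF z) p)] at e1
  linarith

end Aux
section Aux2

lemma Jc_apply (ε : ℝ) (v : E 4) :
    (Jc ε v) 0 = ε * v 1 ∧ (Jc ε v) 1 = v 0 ∧ (Jc ε v) 2 = ε * v 3 ∧ (Jc ε v) 3 = v 2 := by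
  unfold Jc bb
  refine ⟨?_, ?_, ?_, ?_⟩ <;>
    simp [EuclideanSpace.single_apply]

lemma gf_symm (ε ε11 ε22 : ℝ) (F : E 4 → ℝ) (p v w : E 4) :
    gf ε ε11 ε22 F p v w = gf ε ε11 ε22 F p w v := by
  unfold gf; ring

lemma gf_swap (ε ε11 ε22 : ℝ) (F : E 4 → ℝ) (p x u : E 4) :
    gf ε ε11 ε22 F p x (Jc ε u) = - gf ε ε11 ε22 F p (Jc ε x) u := by
  obtain ⟨h0, h1, h2, h3⟩ := Jc_apply ε u
  obtain ⟨g0, g1, g2, g3⟩ := Jc_apply ε x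
  unfold gf
  rw [h0, h1, h2, h3, g0, g1, g2, g3]
  ring

lemma fderiv_gf (ε ε11 ε22 : ℝ) (F : E 4 → ℝ) (hF : ContDiff ℝ (⊤ : ℕ∞) F) (v w : E 4) (p u : E 4) :
    fderiv ℝ (fun q => gf ε ε11 ε22 F q v w) p u
      = 2 * ε11 * Real.exp (2 * F p) * (v 0 * w 0 - ε * v 1 * w 1) * fderiv ℝ F p u := by
  have hd : HasFDerivAt F (fderiv ℝ F p) p :=
    (hF.differentiable (by simp) p).hasFDerivAt
  have h2 : HasFDerivAt (fun q => 2 * F q) ((2:ℝ) • fderiv ℝ F p) p := hd.const_mul 2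
  have h3 : HasFDerivAt (fun q => Real.exp (2 * F q))
      (Real.exp (2 * F p) • ((2:ℝ) • fderiv ℝ F p)) p := h2.exp
  have h4 : HasFDerivAt (fun q => ε11 * Real.exp (2 * F q))
      (ε11 • (Real.exp (2 * F p) • ((2:ℝ) • fderiv ℝ F p))) p := h3.const_mul ε11
  have h5 : HasFDerivAt (fun q => ε11 * Real.exp (2 * F q) * (v 0 * w 0 - ε * v 1 * w 1))
      ((v 0 * w 0 - ε * v 1 * w 1) • (ε11 • (Real.exp (2 * F p) • ((2:ℝ) • fderiv ℝ F p)))) p :=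
    h4.mul_const _
  have h6 : HasFDerivAt (fun q => gf ε ε11 ε22 F q v w)
      ((v 0 * w 0 - ε * v 1 * w 1) • (ε11 • (Real.exp (2 * F p) • ((2:ℝ) • fderiv ℝ F p)))) p := by
    have := h5.add_const (ε22 * (v 2 * w 2 - ε * v 3 * w 3))
    exact this
  rw [h6.fderiv]
  simp only [ContinuousLinearMap.coe_smul', Pi.smul_apply, smul_eq_mul]
  ring

lemma fderiv_F_dir (F : E 4 → ℝ) (hF : ContDiff ℝ (⊤ : ℕ∞) F)
    (hFdep : ∀ p q : E 4, p 0 = q 0 → p 2 = q 2 → F p = F q)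
    (p : E 4) (j : Fin 4) (hj : j = 1 ∨ j = 3) :
    fderiv ℝ F p (bb j) = 0 := by
  have hb0 : (bb j : E 4) 0 = 0 := by
    rcases hj with h | h <;> subst h <;> simp [bb, EuclideanSpace.single_apply]
  have hb2 : (bb j : E 4) 2 = 0 := by
    rcases hj with h | h <;> subst h <;> simp [bb, EuclideanSpace.single_apply]
  have hc : ∀ t : ℝ, F (p + t • bb j) = F p := by
    intro t
    apply hFdep
    · simp [hb0]
    · simp [hb2]
  have hder : HasDerivAt (fun t : ℝ => F (p + t • bb j)) (fderiv ℝ F p (bb j)) 0 := by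
    have hcurve : HasDerivAt (fun t : ℝ => p + t • bb j) (bb j) 0 := by
      simpa using ((hasDerivAt_id (0:ℝ)).smul_const (bb j)).const_add p
    have hFd : HasFDerivAt F (fderiv ℝ F p) (p + (0:ℝ) • bb j) := by
      simpa using (hF.differentiable (by simp) p).hasFDerivAt
    exact hFd.comp_hasDerivAt 0 hcurve
  have hconst : HasDerivAt (fun t : ℝ => F (p + t • bb j)) 0 0 := by
    have : (fun t : ℝ => F (p + t • bb j)) = fun _ => F p := funext hc
    rw [this]; exact hasDerivAt_const 0 _
  exact hder.unique hconst

end Aux2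
section Aux3

lemma bb_apply {m : ℕ} (i l : Fin m) : (bb i : E m) l = if l = i then 1 else 0 := by
  simp [bb, EuclideanSpace.single_apply]

lemma Jc_apply0 (ε : ℝ) (v : E 4) : (Jc ε v) 0 = ε * v 1 := (Jc_apply ε v).1
lemma Jc_apply1 (ε : ℝ) (v : E 4) : (Jc ε v) 1 = v 0 := (Jc_apply ε v).2.1

lemma fderiv_Jc (F : E 4 → ℝ) (p : E 4) (ε : ℝ) (v : E 4) :
    fderiv ℝ F p (Jc ε v)
      = (ε * v 1) * fderiv ℝ F p (bb 0) + v 0 * fderiv ℝ F p (bb 1)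
        + (ε * v 3) * fderiv ℝ F p (bb 2) + v 2 * fderiv ℝ F p (bb 3) := by
  unfold Jc
  simp

lemma master (ε ε11 ε22 : ℝ) (F : E 4 → ℝ) (hF : ContDiff ℝ (⊤ : ℕ∞) F)
    (Dg : VF 4 → VF 4 → VF 4) (hDg : IsLeviCivita Dg (gf ε ε11 ε22 F))
    (i j k : Fin 4) (p : E 4) :
    T11 ε ε11 ε22 F Dg i j k p =
      ε11 * Real.exp (2 * F p) *
        (((bb i : E 4) 0 * (Jc ε (bb j)) 0 - ε * (bb i : E 4) 1 * (Jc ε (bb j)) 1)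
            * fderiv ℝ F p (bb k)
         - ((bb k : E 4) 0 * (Jc ε (bb j)) 0 - ε * (bb k : E 4) 1 * (Jc ε (bb j)) 1)
            * fderiv ℝ F p (bb i)
         + ((bb k : E 4) 0 * (bb i : E 4) 0 - ε * (bb k : E 4) 1 * (bb i : E 4) 1)
            * fderiv ℝ F p (Jc ε (bb j))
         + ((bb j : E 4) 0 * (Jc ε (bb i)) 0 - ε * (bb j : E 4) 1 * (Jc ε (bb i)) 1)
            * fderiv ℝ F p (bb k)
         + ((bb k : E 4) 0 * (Jc ε (bb i)) 0 - ε * (bb k : E 4) 1 * (Jc ε (bb i)) 1)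
            * fderiv ℝ F p (bb j)
         - ((bb k : E 4) 0 * (bb j : E 4) 0 - ε * (bb k : E 4) 1 * (bb j : E 4) 1)
            * fderiv ℝ F p (Jc ε (bb i))) := by
  have hsymm := gf_symm ε ε11 ε22 F
  have hk1 := koszul hDg hsymm (bb k) (bb i) (Jc ε (bb j)) p
  have hk2 := koszul hDg hsymm (bb k) (bb j) (Jc ε (bb i)) p
  unfold T11 covOmega
  simp only [cVF]
  rw [gf_swap ε ε11 ε22 F p (bb i) (Dg (cVF (bb k)) (cVF (bb j)) p),
    hsymm p (Jc ε (bb i)) (Dg (cVF (bb k)) (cVF (bb j)) p)]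
  simp only [fderiv_gf ε ε11 ε22 F hF] at hk1 hk2 ⊢
  linear_combination (-(1:ℝ)/2) * hk1 + (1/2) * hk2

end Aux3
set_option maxHeartbeats 1600000
/-- the nonzero components of `∇^{g_f}Ω` for the metric `g_f` with
`f = f(x₁,x₃)` on `ℝ⁴` (indices here are 0-based: `∂₁ = bb 0`, ..., `∂₄ = bb 3`). -/
theorem statement11 (ε ε11 ε22 : ℝ)
    (hε : ε = 1 ∨ ε = -1) (h11 : ε11 = 1 ∨ ε11 = -1) (h22 : ε22 = 1 ∨ ε22 = -1)
    (F : E 4 → ℝ) (hF : ContDiff ℝ (⊤ : ℕ∞) F)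
    (hFdep : ∀ p q : E 4, p 0 = q 0 → p 2 = q 2 → F p = F q)
    (Dg : VF 4 → VF 4 → VF 4) (hDg : IsLeviCivita Dg (gf ε ε11 ε22 F)) :
    ∀ p : E 4,
      T11 ε ε11 ε22 F Dg 0 2 1 p = -ε * ε11 * Real.exp (2 * F p) * fderiv ℝ F p (bb 2) ∧
      T11 ε ε11 ε22 F Dg 0 3 0 p = ε * ε11 * Real.exp (2 * F p) * fderiv ℝ F p (bb 2) ∧
      T11 ε ε11 ε22 F Dg 1 3 1 p = -ε11 * Real.exp (2 * F p) * fderiv ℝ F p (bb 2) ∧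
      T11 ε ε11 ε22 F Dg 1 2 0 p = ε * ε11 * Real.exp (2 * F p) * fderiv ℝ F p (bb 2) ∧
      ∀ i j k : Fin 4,
        (i, j, k) ∉ ([(0,2,1), (2,0,1), (0,3,0), (3,0,0), (1,3,1), (3,1,1), (1,2,0), (2,1,0)] :
          List (Fin 4 × Fin 4 × Fin 4)) →
        T11 ε ε11 ε22 F Dg i j k p = 0 := by

  intro p
  have h1 : fderiv ℝ F p (bb 1) = 0 := fderiv_F_dir F hF hFdep p 1 (Or.inl rfl)
  have h3 : fderiv ℝ F p (bb 3) = 0 := fderiv_F_dir F hF hFdep p 3 (Or.inr rfl)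
  have M := master ε ε11 ε22 F hF Dg hDg
  refine ⟨?_, ?_, ?_, ?_, ?_⟩
  · rw [M]; simp [bb_apply, Jc_apply0, Jc_apply1, fderiv_Jc, h1, h3]
    rcases hε with rfl | rfl <;> norm_num <;> ring
  · rw [M]; simp [bb_apply, Jc_apply0, Jc_apply1, fderiv_Jc, h1, h3]
    rcases hε with rfl | rfl <;> norm_num <;> ring
  · rw [M]; simp [bb_apply, Jc_apply0, Jc_apply1, fderiv_Jc, h1, h3]
    rcases hε with rfl | rfl <;> norm_num <;> ring
  · rw [M]; simp [bb_apply, Jc_apply0, Jc_apply1, fderiv_Jc, h1, h3]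
    rcases hε with rfl | rfl <;> norm_num <;> ring
  · intro i j k hmem
    fin_cases i <;> fin_cases j <;> fin_cases k <;>
      first
        | exact absurd (by decide) hmem
        | (rw [M]; simp [bb_apply, Jc_apply0, Jc_apply1, fderiv_Jc, h1, h3];
           try (rcases hε with rfl | rfl <;> norm_num <;> try ring))
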